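/- Define operators on R: Ĥf(Λ,x) = γ̂[ A(Λ,x) · γ̂( f(Λ, x/(tqQ)) ) ] where A(Λ,x) = ∏_{n≥0} (1 + q^n x/Q)^{-1} (1 + q^{n+1} Λ/x)^{-1} ∈ R, and Ĥ_Toda f(Λ,x) = f(Λ, qx) + tQ·f(Λ, x/q) + t x·f(Λ,x) + (Λ/x)·f(Λ,x). Then Ĥ and Ĥ_Toda commute: Ĥ ∘ Ĥ_Toda = Ĥ_Toda ∘ Ĥ as operators on R. -/

import Mathlib

/-!
STATEMENT 1.  In `R = F((x))[[Λ]]`, with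
`Ĥf(Λ,x) = γ̂[ ∏_{n≥0}(1+qⁿx/Q)⁻¹(1+q^{n+1}Λ/x)⁻¹ · γ̂(f(Λ, x/(tqQ))) ]`
and `Ĥ_Toda f(Λ,x) = f(Λ,qx) + tQ·f(Λ,x/q) + tx·f(Λ,x) + (Λ/x)·f(Λ,x)`,
the operators `Ĥ` and `Ĥ_Toda` commute.
-/

noncomputable section

open PowerSeries Finset

/-- `F = ℚ(q,t,Q)`. -/
abbrev F : Type := FractionRing (MvPolynomial (Fin 3) ℚ)

def q : F := algebraMap (MvPolynomial (Fin 3) ℚ) F (MvPolynomial.X 0)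
def t : F := algebraMap (MvPolynomial (Fin 3) ℚ) F (MvPolynomial.X 1)
def Q : F := algebraMap (MvPolynomial (Fin 3) ℚ) F (MvPolynomial.X 2)

/-- `F((x))`. -/
abbrev LS : Type := LaurentSeries F
/-- `R = F((x))[[Λ]]`. -/
abbrev R : Type := PowerSeries LS

/-- The operator on Laurent series multiplying the coefficient of `x^n` by `c n`. -/
def diagX (c : ℤ → F) (f : LS) : LS where
  coeff n := c n * f.coeff n
  isPWO_support' := f.isPWO_support'.mono (by
    intro n hn
    simp only [Function.mem_support, ne_eq] at hn ⊢
    exact fun h => hn (by rw [h, mul_zero]))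

/-- The continuous `F`-linear operator on `R` multiplying the coefficient of
`Λ^m x^n` by `c n`. -/
def onX (c : ℤ → F) (f : R) : R := PowerSeries.mk fun m => diagX c (PowerSeries.coeff m f)

/-- `γ̂`, with `γ̂(Λ^m x^n) = q^{n(n+1)/2} Λ^m x^n`. -/
def gammaHat : R → R := onX fun n => q ^ (n * (n + 1) / 2)

/-- The substitution `x ↦ a x`. -/
def subX (a : F) : R → R := onX fun n => a ^ n

/-- The element `x ∈ R`. -/
def Xe : R := PowerSeries.C (HahnSeries.single (1 : ℤ) (1 : F))
/-- The element `x⁻¹ ∈ R`. -/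
def Xi : R := PowerSeries.C (HahnSeries.single (-1 : ℤ) (1 : F))
/-- The element `Λ ∈ R`. -/
def Le : R := PowerSeries.X
/-- Scalars embedded in `R`. -/
def CF (a : F) : R := PowerSeries.C (HahnSeries.C a)

/-- q-Pochhammer symbol `(z)_n = ∏_{i<n} (1 - qⁱ z)`. -/
def poch (z : F) (n : ℕ) : F := ∏ i ∈ Finset.range n, (1 - q ^ i * z)

/-- `∏_{i≥0}(1 - qⁱ a x)⁻¹ ∈ F((x)) ⊆ R`, via the (x-adically convergent)
Euler expansion `Σ_n aⁿxⁿ/(q)_n`. -/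
def iphiX (a : F) : R :=
  PowerSeries.C (HahnSeries.ofPowerSeries ℤ F (PowerSeries.mk fun n => a ^ n / poch q n))

/-- `∏_{i≥0}(1 - qⁱ a Λ)⁻¹ ∈ R` for `a ∈ F((x))`, via the Euler expansion
`Σ_m aᵐΛᵐ/(q)_m`; taking `a` a multiple of `x⁻¹` covers factors `(1 - qⁱ c Λ/x)⁻¹`. -/
def iphiL (a : LS) : R := PowerSeries.mk fun m => HahnSeries.C (poch q m)⁻¹ * a ^ m

/-- `A(Λ,x) = ∏_{n≥0}(1 + qⁿ x/Q)⁻¹ (1 + q^{n+1} Λ/x)⁻¹ ∈ R`. -/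
def Aelem : R := iphiX (-Q⁻¹) * iphiL (HahnSeries.single (-1 : ℤ) (-q))

/-- `Ĥ f(Λ,x) = γ̂[ A(Λ,x) · γ̂( f(Λ, x/(tqQ)) ) ]`. -/
def Hhat : R → R := fun f => gammaHat (Aelem * gammaHat (subX (t * q * Q)⁻¹ f))

/-- `Ĥ_Toda f(Λ,x) = f(Λ,qx) + tQ·f(Λ,x/q) + tx·f(Λ,x) + (Λ/x)·f(Λ,x)`. -/
def Htoda : R → R := fun f =>
  subX q f + CF (t * Q) * subX q⁻¹ f + CF t * Xe * f + Le * Xi * f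


/-! ### Auxiliary infrastructure -/

-- basics
lemma FmapInj : Function.Injective (algebraMap (MvPolynomial (Fin 3) ℚ) F) :=
  IsFractionRing.injective _ _

lemma q_pow_ne_one (k : ℕ) (hk : k ≠ 0) : q ^ k ≠ 1 := by
  intro h
  have h2 : algebraMap (MvPolynomial (Fin 3) ℚ) F (MvPolynomial.X 0 ^ k) =
      algebraMap (MvPolynomial (Fin 3) ℚ) F 1 := by
    rw [map_pow, map_one]; exact h
  have h3 := FmapInj h2
  have h4 := congrArg (MvPolynomial.eval (fun _ => (0:ℚ))) h3
  simp [zero_pow hk] at h4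

lemma q_ne_zero : q ≠ 0 := by
  intro h
  have h2 : algebraMap (MvPolynomial (Fin 3) ℚ) F (MvPolynomial.X 0) =
      algebraMap (MvPolynomial (Fin 3) ℚ) F 0 := by rw [map_zero]; exact h
  exact MvPolynomial.X_ne_zero 0 (FmapInj h2)

@[simp] lemma diagX_coeff (c : ℤ → F) (f : LS) (n : ℤ) :
    (diagX c f).coeff n = c n * f.coeff n := rfl

lemma diagX_add (c : ℤ → F) (f g : LS) : diagX c (f + g) = diagX c f + diagX c g := by
  ext n; simp [mul_add]

@[simp] lemma diagX_zero (c : ℤ → F) : diagX c 0 = 0 := by ext n; simp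

lemma diagX_diagX (c d : ℤ → F) (f : LS) :
    diagX c (diagX d f) = diagX (fun n => c n * d n) f := by
  ext n; simp [mul_assoc]

lemma diagX_one' (f : LS) : diagX (fun _ => (1:F)) f = f := by
  ext n; simp

lemma diagX_single (c : ℤ → F) (d : ℤ) (r : F) :
    diagX c (HahnSeries.single d r) = HahnSeries.single d (c d * r) := by
  ext n
  rw [diagX_coeff]
  by_cases h : n = d
  · subst h; rw [HahnSeries.coeff_single_same, HahnSeries.coeff_single_same]
  · rw [HahnSeries.coeff_single_of_ne h, HahnSeries.coeff_single_of_ne h, mul_zero]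

lemma diagX_single_mul (c : ℤ → F) (d : ℤ) (r : F) (f : LS) :
    diagX c (HahnSeries.single d r * f) = HahnSeries.single d r * diagX (fun n => c (d + n)) f := by
  ext n
  obtain ⟨m, rfl⟩ : ∃ m, n = m + d := ⟨n - d, by ring⟩
  rw [diagX_coeff, HahnSeries.coeff_single_mul_add, HahnSeries.coeff_single_mul_add, diagX_coeff,
    add_comm d m]
  ring

lemma diagX_support (c : ℤ → F) (f : LS) : (diagX c f).support ⊆ f.support := by
  intro n hn
  rw [HahnSeries.mem_support, diagX_coeff] at hn
  rw [HahnSeries.mem_support]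
  exact fun h => hn (by rw [h, mul_zero])

lemma mul_coeff_both {x y : LS} {s s' : Set ℤ} (hs : s.IsPWO) (hs' : s'.IsPWO)
    (hx : x.support ⊆ s) (hy : y.support ⊆ s') (n : ℤ) :
    (x * y).coeff n = ∑ ij ∈ Finset.antidiagonal hs hs' n, x.coeff ij.1 * y.coeff ij.2 := by
  rw [HahnSeries.coeff_mul_left' hs hx]
  apply Finset.sum_subset
  · intro ij hij
    rw [Finset.mem_antidiagonal] at hij ⊢
    exact ⟨hij.1, hy hij.2.1, hij.2.2⟩
  · intro ij h1 h2
    rw [Finset.mem_antidiagonal] at h1 h2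
    have : y.coeff ij.2 = 0 := by
      by_contra hc
      exact h2 ⟨h1.1, hc, h1.2.2⟩
    rw [this, mul_zero]

lemma diagX_zpow_mul (a : F) (ha : a ≠ 0) (f g : LS) :
    diagX (fun n => a ^ n) (f * g) =
      diagX (fun n => a ^ n) f * diagX (fun n => a ^ n) g := by
  ext n
  rw [diagX_coeff, HahnSeries.coeff_mul,
    mul_coeff_both f.isPWO_support g.isPWO_support (diagX_support _ f) (diagX_support _ g) n,
    Finset.mul_sum]
  apply Finset.sum_congr rfl
  intro ij hij
  rw [Finset.mem_addAntidiagonal] at hij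
  rw [diagX_coeff, diagX_coeff, ← hij.2.2, zpow_add₀ ha]
  ring


lemma t_ne_zero : t ≠ 0 := by
  intro h
  have h2 : algebraMap (MvPolynomial (Fin 3) ℚ) F (MvPolynomial.X 1) =
      algebraMap (MvPolynomial (Fin 3) ℚ) F 0 := by rw [map_zero]; exact h
  exact MvPolynomial.X_ne_zero 1 (FmapInj h2)

lemma Q_ne_zero : Q ≠ 0 := by
  intro h
  have h2 : algebraMap (MvPolynomial (Fin 3) ℚ) F (MvPolynomial.X 2) =
      algebraMap (MvPolynomial (Fin 3) ℚ) F 0 := by rw [map_zero]; exact h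
  exact MvPolynomial.X_ne_zero 2 (FmapInj h2)

lemma poch_factor_ne_zero (i : ℕ) : 1 - q ^ i * q ≠ 0 := by
  intro h
  have h1 : q ^ (i + 1) = 1 := by
    rw [pow_succ]
    exact (sub_eq_zero.mp h).symm
  exact q_pow_ne_one (i+1) (Nat.succ_ne_zero i) h1

lemma poch_ne_zero (m : ℕ) : poch q m ≠ 0 := by
  unfold poch
  exact Finset.prod_ne_zero_iff.mpr fun i _ => poch_factor_ne_zero i

lemma poch_zero : poch q 0 = 1 := by simp [poch]

lemma poch_succ (m : ℕ) : poch q (m + 1) = poch q m * (1 - q ^ m * q) := by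
  unfold poch
  rw [Finset.prod_range_succ]

/-! ### onX lemmas -/

lemma onX_coeff (c : ℤ → F) (f : R) (m : ℕ) :
    PowerSeries.coeff m (onX c f) = diagX c (PowerSeries.coeff m f) :=
  PowerSeries.coeff_mk _ _

lemma onX_add (c : ℤ → F) (f g : R) : onX c (f + g) = onX c f + onX c g := by
  ext m
  rw [map_add, onX_coeff, onX_coeff, onX_coeff, map_add, diagX_add]

lemma onX_onX (c d : ℤ → F) (f : R) :
    onX c (onX d f) = onX (fun n => c n * d n) f := by
  ext m
  rw [onX_coeff, onX_coeff, onX_coeff, diagX_diagX]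

lemma onX_congr (c d : ℤ → F) (h : ∀ n, c n = d n) (f : R) : onX c f = onX d f := by
  have : c = d := funext h
  rw [this]

lemma onX_id (f : R) : onX (fun _ => (1:F)) f = f := by
  ext m
  rw [onX_coeff, diagX_one']

lemma onX_C (c : ℤ → F) (h : LS) :
    onX c (PowerSeries.C h) = PowerSeries.C (diagX c h) := by
  ext m
  rw [onX_coeff, PowerSeries.coeff_C, PowerSeries.coeff_C]
  split
  · rfl
  · rw [diagX_zero]

lemma onX_C_single_mul (c : ℤ → F) (d : ℤ) (r : F) (f : R) :
    onX c (PowerSeries.C (HahnSeries.single d r) * f) =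
      PowerSeries.C (HahnSeries.single d r) * onX (fun n => c (d + n)) f := by
  ext m
  rw [onX_coeff, PowerSeries.coeff_C_mul, PowerSeries.coeff_C_mul, onX_coeff, diagX_single_mul]

lemma onX_X_mul (c : ℤ → F) (f : R) :
    onX c (PowerSeries.X * f) = PowerSeries.X * onX c f := by
  ext m
  cases m with
  | zero => rw [onX_coeff, PowerSeries.coeff_zero_X_mul, PowerSeries.coeff_zero_X_mul, diagX_zero]
  | succ k => rw [onX_coeff, PowerSeries.coeff_succ_X_mul, PowerSeries.coeff_succ_X_mul, onX_coeff]

lemma diagX_sum {α : Type} (c : ℤ → F) (s : Finset α) (G : α → LS) :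
    diagX c (∑ i ∈ s, G i) = ∑ i ∈ s, diagX c (G i) :=
  map_sum (AddMonoidHom.mk' (diagX c) (diagX_add c)) G s

lemma subX_mul (a : F) (ha : a ≠ 0) (f g : R) :
    subX a (f * g) = subX a f * subX a g := by
  apply PowerSeries.ext; intro m
  rw [subX, onX_coeff, PowerSeries.coeff_mul, PowerSeries.coeff_mul, diagX_sum]
  apply Finset.sum_congr rfl
  intro p _
  rw [onX_coeff, onX_coeff, diagX_zpow_mul a ha]

/-! ### Triangular number arithmetic -/

lemma tri_add (d n : ℤ) :
    (d + n) * ((d + n) + 1) / 2 = d * (d + 1) / 2 + d * n + n * (n + 1) / 2 := by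
  obtain ⟨a, ha⟩ := Int.even_mul_succ_self d
  obtain ⟨b, hb⟩ := Int.even_mul_succ_self n
  obtain ⟨e, he⟩ := Int.even_mul_succ_self (d + n)
  have key : e = a + d * n + b := by
    have h2 : e + e = (a + a) + (d * n + d * n) + (b + b) := by
      rw [← he, ← ha, ← hb]; ring
    linarith
  rw [ha, hb, he]
  set w := d * n with hw
  omega

/-! ### Monomial commutation lemmas -/

lemma C_single_mul_C_single (d e : ℤ) (r s : F) :
    (PowerSeries.C (HahnSeries.single d r)) * (PowerSeries.C (HahnSeries.single e s)) =
      PowerSeries.C (HahnSeries.single (d + e) (r * s)) := by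
  rw [← map_mul, HahnSeries.single_mul_single]

lemma onX_smul (K : F) (c : ℤ → F) (f : R) :
    onX (fun n => K * c n) f = PowerSeries.C (HahnSeries.single 0 K) * onX c f := by
  apply PowerSeries.ext; intro m
  rw [onX_coeff, PowerSeries.coeff_C_mul, onX_coeff]
  apply HahnSeries.ext
  funext n
  obtain ⟨p, rfl⟩ : ∃ p, n = p + 0 := ⟨n, by ring⟩
  rw [diagX_coeff, HahnSeries.coeff_single_mul_add, diagX_coeff]
  ring

lemma subX_single_mul (a : F) (ha : a ≠ 0) (d : ℤ) (r : F) (f : R) :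
    subX a (PowerSeries.C (HahnSeries.single d r) * f) =
      PowerSeries.C (HahnSeries.single d (a ^ d * r)) * subX a f := by
  rw [subX, onX_C_single_mul]
  have : (fun n => a ^ (d + n)) = fun n => (a ^ d) * a ^ n :=
    funext fun n => zpow_add₀ ha d n
  rw [this, onX_smul, ← mul_assoc, C_single_mul_C_single, add_zero, mul_comm r (a ^ d)]

lemma gamma_single_mul (d : ℤ) (r : F) (f : R) :
    gammaHat (PowerSeries.C (HahnSeries.single d r) * f) =
      PowerSeries.C (HahnSeries.single d (q ^ (d * (d + 1) / 2) * r)) *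
        subX (q ^ d) (gammaHat f) := by
  rw [gammaHat, onX_C_single_mul]
  have : (fun n => q ^ ((d + n) * ((d + n) + 1) / 2)) =
      fun n => (q ^ (d * (d + 1) / 2)) * ((q ^ d) ^ n * q ^ (n * (n + 1) / 2)) := by
    funext n
    rw [tri_add d n, zpow_add₀ q_ne_zero, zpow_add₀ q_ne_zero, ← zpow_mul]
    ring
  rw [this, onX_smul, ← onX_onX, ← mul_assoc, C_single_mul_C_single, add_zero,
    mul_comm r (q ^ (d * (d + 1) / 2))]
  rfl

lemma subX_subX (a b : F) (f : R) : subX a (subX b f) = subX (a * b) f := by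
  rw [subX, subX, subX, onX_onX]
  exact onX_congr _ _ (fun n => (mul_zpow a b n).symm) f

lemma subX_gamma_comm (a : F) (f : R) :
    subX a (gammaHat f) = gammaHat (subX a f) := by
  rw [subX, gammaHat, onX_onX, onX_onX]
  exact onX_congr _ _ (fun n => mul_comm _ _) f

lemma subX_inv_subX (a : F) (ha : a ≠ 0) (f : R) : subX a⁻¹ (subX a f) = f := by
  rw [subX_subX, inv_mul_cancel₀ ha]
  have : (fun n : ℤ => (1:F) ^ n) = fun _ => (1:F) := funext fun n => one_zpow n
  rw [subX, this, onX_id]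

lemma subX_inv_subX' (a : F) (ha : a ≠ 0) (f : R) : subX a (subX a⁻¹ f) = f := by
  have := subX_inv_subX a⁻¹ (inv_ne_zero ha) f
  rwa [inv_inv] at this

lemma subX_X_mul (a : F) (f : R) : subX a (Le * f) = Le * subX a f := onX_X_mul _ f

lemma gamma_X_mul (f : R) : gammaHat (Le * f) = Le * gammaHat f := onX_X_mul _ f

lemma subX_add (a : F) (f g : R) : subX a (f + g) = subX a f + subX a g := onX_add _ f g

lemma gamma_add (f g : R) : gammaHat (f + g) = gammaHat f + gammaHat g := onX_add _ f g

lemma subX_C_single (a : F) (d : ℤ) (r : F) :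
    subX a (PowerSeries.C (HahnSeries.single d r)) =
      PowerSeries.C (HahnSeries.single d (a ^ d * r)) := by
  rw [subX, onX_C, diagX_single]

lemma subX_one (a : F) : subX a 1 = 1 := by
  have h1 : (1 : R) = PowerSeries.C (HahnSeries.single 0 1) := by
    rw [HahnSeries.single_zero_one, map_one]
  rw [h1, subX_C_single, zpow_zero, one_mul]

lemma single_add' (d : ℤ) (r s : F) :
    HahnSeries.single d (r + s) = HahnSeries.single d r + HahnSeries.single d s := by
  ext n
  rw [HahnSeries.coeff_add]
  simp only [HahnSeries.coeff_single]
  split <;> simp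

/-! ### The q-difference equations for the Euler products -/

/-- `(1 - a x)·Φ(a) = Φ(a)(qx)` where `Φ(a) = Σ aⁿxⁿ/(q)ₙ`. -/
lemma iphiX_shift (a : F) :
    (1 - PowerSeries.C (HahnSeries.single 1 a)) * iphiX a = subX q (iphiX a) := by
  set φ : PowerSeries F := PowerSeries.mk fun n => a ^ n / poch q n with hφ
  set w : LS := HahnSeries.ofPowerSeries ℤ F φ with hw
  have hC : iphiX a = PowerSeries.C w := rfl
  rw [hC, subX, onX_C, one_sub_mul, ← map_mul, ← map_sub]
  congr 1
  ext n
  rw [HahnSeries.coeff_sub, diagX_coeff]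
  obtain ⟨m, rfl⟩ : ∃ m, n = m + 1 := ⟨n - 1, by ring⟩
  rw [HahnSeries.coeff_single_mul_add]
  rcases lt_trichotomy (m + 1) 0 with h | h | h
  · have hm : m < 0 := by omega
    rw [hw, PowerSeries.coeff_coe, PowerSeries.coeff_coe, if_pos h, if_pos hm]
    simp
  · have hm : m = -1 := by omega
    subst hm
    have h0 : (-1 : ℤ) + 1 = 0 := by ring
    rw [h0, zpow_zero, one_mul, hw]
    rw [show ((HahnSeries.ofPowerSeries ℤ F) φ).coeff (-1) = 0 by
      rw [PowerSeries.coeff_coe]; norm_num]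
    rw [mul_zero, sub_zero]
  · -- m + 1 > 0, so m = (k : ℕ), m + 1 = k + 1
    obtain ⟨k, hk⟩ : ∃ k : ℕ, m = (k : ℤ) := ⟨m.toNat, by omega⟩
    subst hk
    have h1 : ((k : ℤ) + 1) = ((k + 1 : ℕ) : ℤ) := by push_cast; ring
    rw [h1, hw, PowerSeries.coeff_coe, PowerSeries.coeff_coe, if_neg (by omega), if_neg (by omega),
      Int.natAbs_natCast, Int.natAbs_natCast, hφ, PowerSeries.coeff_mk, PowerSeries.coeff_mk,
      zpow_natCast]
    rw [poch_succ, pow_succ]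
    have h2 := poch_ne_zero k
    have h3 := poch_factor_ne_zero k
    field_simp
    ring

/-- `subX q` on `iphiL (single (-1) (-q))` yields `iphiL (single (-1) (-1))`. -/
lemma iphiL_sub : subX q (iphiL (HahnSeries.single (-1) (-q))) =
    iphiL (HahnSeries.single (-1) (-1)) := by
  apply PowerSeries.ext; intro m
  rw [subX, onX_coeff, iphiL, iphiL, PowerSeries.coeff_mk, PowerSeries.coeff_mk]
  simp only [HahnSeries.single_pow, HahnSeries.C_apply, HahnSeries.single_mul_single]
  rw [diagX_single]
  have he : (m • (-1 : ℤ)) = -(m : ℤ) := by simp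
  rw [he, zero_add]
  congr 1
  rw [zpow_neg, zpow_natCast, neg_pow q m, neg_pow (1:F) m, one_pow]
  have h2 := pow_ne_zero m q_ne_zero
  field_simp

/-- `(1 + Λ/x)·iphiL(single (-1) (-1)) = iphiL (single (-1) (-q))`. -/
lemma iphiL_shift : (1 + Le * Xi) * iphiL (HahnSeries.single (-1) (-1)) =
    iphiL (HahnSeries.single (-1) (-q)) := by
  apply PowerSeries.ext; intro m
  rw [add_mul, one_mul, map_add, mul_assoc]
  cases m with
  | zero =>
      rw [Le, PowerSeries.coeff_zero_X_mul, add_zero, iphiL, iphiL, PowerSeries.coeff_mk,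
        PowerSeries.coeff_mk, pow_zero, pow_zero]
  | succ k =>
      rw [Le, PowerSeries.coeff_succ_X_mul, Xi, PowerSeries.coeff_C_mul, iphiL, iphiL,
        PowerSeries.coeff_mk, PowerSeries.coeff_mk, PowerSeries.coeff_mk]
      simp only [HahnSeries.single_pow, HahnSeries.C_apply, HahnSeries.single_mul_single]
  -- now pure single identities
      have e1 : ((k + 1 : ℕ) • (-1 : ℤ)) = -(k : ℤ) - 1 := by simp; ring
      have e2 : ((k : ℕ) • (-1 : ℤ)) = -(k : ℤ) := by simp
      rw [e1, e2, zero_add, zero_add]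
      have e3 : (-1 : ℤ) + -(k:ℤ) = -(k:ℤ) - 1 := by ring
      rw [e3, one_mul, ← single_add']
      congr 1
      have h1 := poch_ne_zero k
      have h2 := poch_ne_zero (k + 1)
      have h3 : (-q : F) ^ (k+1) = (-1)^(k+1) * q^(k+1) := by rw [neg_pow]
      have h4 : ((-1 : F)) ^ (k+1) = -((-1:F))^k := by rw [pow_succ]; ring
      rw [poch_succ] at h2 ⊢
      have h5 := poch_factor_ne_zero k
      rw [h3, h4]
      field_simp
      ring

/-! ### More helpers -/

/-- Abbreviation for monomials `r·xᵈ` in `R`. -/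
def CS (d : ℤ) (r : F) : R := PowerSeries.C (HahnSeries.single d r)

lemma CS_mul_CS (d e : ℤ) (r s : F) : CS d r * CS e s = CS (d + e) (r * s) :=
  C_single_mul_C_single d e r s

lemma CF_eq (r : F) : CF r = CS 0 r := by rw [CF, CS, HahnSeries.C_apply]

lemma Xe_eq : Xe = CS 1 1 := rfl
lemma Xi_eq : Xi = CS (-1) 1 := rfl

lemma onX_CS0_mul (c : ℤ → F) (r : F) (f : R) :
    onX c (CS 0 r * f) = CS 0 r * onX c f := by
  rw [CS, onX_C_single_mul]
  congr 1
  exact onX_congr _ _ (fun n => by rw [zero_add]) f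

lemma subX_CS0_mul (a : F) (r : F) (f : R) : subX a (CS 0 r * f) = CS 0 r * subX a f :=
  onX_CS0_mul _ r f

lemma gamma_CS0_mul (r : F) (f : R) : gammaHat (CS 0 r * f) = CS 0 r * gammaHat f :=
  onX_CS0_mul _ r f

lemma subX_CS_mul (a : F) (ha : a ≠ 0) (d : ℤ) (r : F) (f : R) :
    subX a (CS d r * f) = CS d (a ^ d * r) * subX a f :=
  subX_single_mul a ha d r f

lemma gamma_CS1_mul (r : F) (f : R) :
    gammaHat (CS 1 r * f) = CS 1 (q * r) * subX q (gammaHat f) := by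
  have h := gamma_single_mul 1 r f
  have e : ((1:ℤ) * (1 + 1) / 2) = 1 := by norm_num
  rw [e, zpow_one] at h
  exact h

lemma gamma_CSm1_mul (r : F) (f : R) :
    gammaHat (CS (-1) r * f) = CS (-1) r * subX q⁻¹ (gammaHat f) := by
  have h := gamma_single_mul (-1) r f
  have e : ((-1:ℤ) * (-1 + 1) / 2) = 0 := by norm_num
  rw [e, zpow_zero, one_mul, zpow_neg_one] at h
  exact h

lemma CS1_mul_gamma (r : F) (g : R) :
    CS 1 r * gammaHat g = gammaHat (CS 1 (r * q⁻¹) * subX q⁻¹ g) := by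
  have e : q * (r * q⁻¹) = r := by
    rw [mul_comm r q⁻¹, ← mul_assoc, mul_inv_cancel₀ q_ne_zero, one_mul]
  rw [gamma_CS1_mul, e, subX_gamma_comm, subX_inv_subX' q q_ne_zero]

lemma CSm1_mul_gamma (r : F) (g : R) :
    CS (-1) r * gammaHat g = gammaHat (CS (-1) r * subX q g) := by
  rw [gamma_CSm1_mul, subX_gamma_comm, subX_inv_subX q q_ne_zero]

/-! ### The two key identities -/

lemma idI : Aelem * (1 + CS 1 Q⁻¹) = subX q Aelem * (1 + Le * CS (-1) 1) := by
  have hP := iphiX_shift (-Q⁻¹)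
  have hneg : (1 : R) - PowerSeries.C (HahnSeries.single 1 (-Q⁻¹)) = 1 + CS 1 Q⁻¹ := by
    rw [sub_eq_add_neg, ← map_neg, CS]
    congr 2
    ext n
    rw [HahnSeries.coeff_neg]
    simp only [HahnSeries.coeff_single]
    split <;> simp
  rw [hneg] at hP
  have hXi : Xi = CS (-1) 1 := rfl
  have hshift := iphiL_shift
  rw [hXi] at hshift
  rw [Aelem, subX_mul q q_ne_zero, iphiL_sub, ← hP, ← hshift]
  ring

lemma c_ne_zero : (t * q * Q)⁻¹ ≠ 0 :=
  inv_ne_zero (mul_ne_zero (mul_ne_zero t_ne_zero q_ne_zero) Q_ne_zero)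

lemma idII : Aelem * (CS 0 (t*Q) + Le * CS (-1) (t*q*Q)) =
    subX q⁻¹ Aelem * (CS 0 (t*Q) + CS 1 (t * q⁻¹)) := by
  have h := congrArg (subX q⁻¹) idI
  rw [subX_mul q⁻¹ (inv_ne_zero q_ne_zero), subX_mul q⁻¹ (inv_ne_zero q_ne_zero),
    subX_inv_subX q q_ne_zero] at h
  have e1 : subX q⁻¹ (1 + CS 1 Q⁻¹) = 1 + CS 1 (q⁻¹ * Q⁻¹) := by
    rw [subX_add, subX_one, CS, subX_C_single, zpow_one, ← CS]
  have e2 : subX q⁻¹ (1 + Le * CS (-1) 1) = 1 + Le * CS (-1) q := by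
    rw [subX_add, subX_one, subX_X_mul, CS, subX_C_single, ← CS]
    congr 3
    rw [zpow_neg_one, inv_inv, mul_one]
  rw [e1, e2] at h
  -- h : Aelem * (1 + CS 1 (q⁻¹ * Q⁻¹)) = subX q⁻¹ Aelem * (1 + Le * CS (-1) q)
  have f1 : CS (-1) (t*q*Q) = CS 0 (t*Q) * CS (-1) q := by
    rw [CS_mul_CS]
    congr 1
    ring
  have f2 : CS 1 (t * q⁻¹) = CS 0 (t*Q) * CS 1 (q⁻¹ * Q⁻¹) := by
    rw [CS_mul_CS, show t*Q*(q⁻¹*Q⁻¹) = t*q⁻¹*(Q*Q⁻¹) from by ring,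
      mul_inv_cancel₀ Q_ne_zero, mul_one, show ((0:ℤ)+1) = 1 from by norm_num]
  rw [f1, f2]
  linear_combination (CS 0 (t*Q)) * h.symm

/-! ### Main theorem -/

/-- `Ĥ ∘ Ĥ_Toda = Ĥ_Toda ∘ Ĥ` as operators on `R`. -/
theorem stmt1 : ∀ f : R, Hhat (Htoda f) = Htoda (Hhat f) := by
  intro f
  set c : F := (t * q * Q)⁻¹ with hc
  set u : R := gammaHat (subX c f) with hu
  have hc0 : c ≠ 0 := c_ne_zero
  have hcinv : c⁻¹ = t * q * Q := by rw [hc, inv_inv]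
  have hqct : q * (c * t) = Q⁻¹ := by
    rw [hc]
    field_simp [t_ne_zero, q_ne_zero, Q_ne_zero]
  -- Step 1
  have h1 : subX c (Htoda f) =
      subX (c*q) f + CS 0 (t*Q) * subX (c*q⁻¹) f + CS 1 (c*t) * subX c f
        + Le * (CS (-1) c⁻¹ * subX c f) := by
    simp only [Htoda, CF_eq, Xe_eq, Xi_eq]
    rw [subX_add, subX_add, subX_add]
    rw [subX_subX, subX_CS0_mul, subX_subX]
    rw [CS_mul_CS, show ((0:ℤ)+1) = 1 from by norm_num, mul_one]
    rw [subX_CS_mul c hc0, zpow_one]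
    rw [mul_assoc Le (CS (-1) 1) f, subX_X_mul, subX_CS_mul c hc0, zpow_neg_one, mul_one]
  -- translations between γ/σ composites and u
  have e1 : gammaHat (subX (c*q) f) = subX q u := by
    rw [hu, subX_gamma_comm, subX_subX, mul_comm q c]
  have e2 : gammaHat (subX (c*q⁻¹) f) = subX q⁻¹ u := by
    rw [hu, subX_gamma_comm, subX_subX, mul_comm q⁻¹ c]
  -- Step 2
  have h2 : gammaHat (subX c (Htoda f)) =
      subX q u + CS 0 (t*Q) * subX q⁻¹ u + CS 1 Q⁻¹ * subX q u
        + Le * (CS (-1) (t*q*Q) * subX q⁻¹ u) := by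
    rw [h1, gamma_add, gamma_add, gamma_add, e1, gamma_CS0_mul, e2, gamma_CS1_mul, hqct,
      gamma_X_mul, gamma_CSm1_mul, hcinv, ← hu]
  -- Step 3 : LHS
  have hL : Hhat (Htoda f) =
      gammaHat (Aelem * ((1 + CS 1 Q⁻¹) * subX q u)
        + Aelem * ((CS 0 (t*Q) + Le * CS (-1) (t*q*Q)) * subX q⁻¹ u)) := by
    simp only [Hhat]
    rw [← hc, h2]
    congr 1
    ring
  -- Step 4 : RHS
  have hR : Htoda (Hhat f) =
      gammaHat (subX q Aelem * ((1 + Le * CS (-1) 1) * subX q u)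
        + subX q⁻¹ Aelem * ((CS 0 (t*Q) + CS 1 (t*q⁻¹)) * subX q⁻¹ u)) := by
    simp only [Hhat, Htoda]
    rw [← hc, ← hu]
    have T1 : subX q (gammaHat (Aelem * u)) = gammaHat (subX q Aelem * subX q u) := by
      rw [subX_gamma_comm, subX_mul q q_ne_zero]
    have T2 : CF (t*Q) * subX q⁻¹ (gammaHat (Aelem * u))
        = gammaHat (CS 0 (t*Q) * (subX q⁻¹ Aelem * subX q⁻¹ u)) := by
      rw [CF_eq, subX_gamma_comm, subX_mul q⁻¹ (inv_ne_zero q_ne_zero), gamma_CS0_mul]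
    have T3 : CF t * Xe * gammaHat (Aelem * u)
        = gammaHat (CS 1 (t*q⁻¹) * (subX q⁻¹ Aelem * subX q⁻¹ u)) := by
      rw [CF_eq, Xe_eq, CS_mul_CS, show ((0:ℤ)+1) = 1 from by norm_num, mul_one,
        CS1_mul_gamma, subX_mul q⁻¹ (inv_ne_zero q_ne_zero)]
    have T4 : Le * Xi * gammaHat (Aelem * u)
        = gammaHat (Le * (CS (-1) 1 * (subX q Aelem * subX q u))) := by
      rw [Xi_eq, mul_assoc, CSm1_mul_gamma, subX_mul q q_ne_zero, ← gamma_X_mul]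
    rw [T1, T2, T3, T4, ← gamma_add, ← gamma_add, ← gamma_add]
    congr 1
    ring
  rw [hL, hR]
  exact congrArg gammaHat (by
    linear_combination (subX q u) * idI + (subX q⁻¹ u) * idII)
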